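/- arXiv:math/0111148 — 3 statements merged into one kernel-verified Lean document; each statement's English description precedes it below -/
import Mathlib

section
/- Let Λ ∈ ADer^1(V) be an alternating biderivation and Γ ∈ ADer^0(V) a derivation of the commutative algebra V, and define the bilinear bracket {f,g} = Λ(f,g) + f·Γ(g) − g·Γ(f) (i.e. {·,·} = Λ + I∧Γ ∈ ADiff_1^1(V)). Then {·,·} is a Lie bracket on V (equivalently [Λ + I∧Γ, Λ + I∧Γ]^{NR} = 0) if and only if [Γ,Λ]^{NR} = 0 and [Λ,Λ]^{NR} = −2·Λ∧Γ. -/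
/-!  Common framework: operations of degree `a ≥ -1` on a vector space `V`
(i.e. `(a+1)`-linear maps `V^{a+1} → V`) are encoded as raw functions
`(ℕ → V) → V` depending only on the first `a+1` entries of the argument
sequence, together with explicit multilinearity/alternation predicates. -/

noncomputable section
open scoped Classical

namespace JacobiRevisited

/-- Raw operations on `V`: an `n`-ary operation is encoded by its action on
infinite sequences of arguments (using only the first `n` of them). -/
abbrev Op (V : Type*) := (ℕ → V) → V

/-- `A` depends only on the first `n` arguments. -/
def DependsOn {V : Type*} (n : ℕ) (A : Op V) : Prop :=
  ∀ x y : ℕ → V, (∀ i, i < n → x i = y i) → A x = A y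

/-- `A` is an `n`-linear map `V^n → V` (encoded on sequences): it depends only on
the first `n` arguments and is `k`-linear in each of them. -/
def IsMultilinearOn (k : Type*) {V : Type*} [Semiring k] [AddCommMonoid V]
    [Module k V] (n : ℕ) (A : Op V) : Prop :=
  DependsOn n A ∧
    ∀ i, i < n →
      (∀ (x : ℕ → V) (c : k) (v : V),
        A (Function.update x i (c • v)) = c • A (Function.update x i v)) ∧
      (∀ (x : ℕ → V) (v w : V),
        A (Function.update x i (v + w)) =
          A (Function.update x i v) + A (Function.update x i w))

/-- `A` is alternating in its first `n` arguments. -/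
def IsAlternatingOn {V : Type*} [Zero V] (n : ℕ) (A : Op V) : Prop :=
  ∀ x : ℕ → V, ∀ i j, i < n → j < n → i ≠ j → x i = x j → A x = 0

/-- The number of arguments of an operation of degree `a` (namely `a+1`). -/
def ar (a : ℤ) : ℕ := (a + 1).toNat

/-- Membership in `M^a(V)`: an `(a+1)`-linear map `V^{a+1} → V`
(for `a = -1` this is just a constant, i.e. an element of `V`). -/
def MemM (k : Type*) {V : Type*} [Semiring k] [AddCommMonoid V] [Module k V]
    (a : ℤ) (A : Op V) : Prop := IsMultilinearOn k (ar a) A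

/-- Membership in `A^a(V)`: an alternating `(a+1)`-linear map `V^{a+1} → V`. -/
def MemA (k : Type*) {V : Type*} [Semiring k] [AddCommMonoid V] [Module k V]
    (a : ℤ) (A : Op V) : Prop :=
  IsMultilinearOn k (ar a) A ∧ IsAlternatingOn (ar a) A

/-- The argument sequence `x_0, …, x_{m-1}, B(x_m,…,x_{m+nB-1}), x_{m+nB}, …`
(arguments for the outer operation after inserting the `nB`-ary `B`
at slot `m`). -/
def insertArg {V : Type*} (B : Op V) (nB m : ℕ) (x : ℕ → V) : ℕ → V := fun j =>
  if j < m then x j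
  else if j = m then B fun i => x (m + i)
  else x (j + nB - 1)

/-- The Gerstenhaber insertion `ι_B A` of `B ∈ M^b(V)` into `A ∈ M^a(V)`:
`ι_B A(x_0,…,x_{a+b}) = Σ_{m=0}^{a} (−1)^{b·m} A(x_0,…,x_{m−1},
B(x_m,…,x_{m+b}), x_{m+b+1},…,x_{a+b})`. -/
def gIns {V : Type*} [AddCommGroup V] (a b : ℤ) (A B : Op V) : Op V := fun x =>
  ∑ m ∈ Finset.range (ar a),
    (((-1 : ℤˣ) ^ (b * (m : ℤ)) : ℤˣ) : ℤ) • A (insertArg B (ar b) m x)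

/-- The Gerstenhaber bracket `[A,B]^G = −ι_A B + (−1)^{ab} ι_B A` of
`A ∈ M^a(V)` and `B ∈ M^b(V)`. -/
def gBracket {V : Type*} [AddCommGroup V] (a b : ℤ) (A B : Op V) : Op V :=
  -(gIns b a B A) + (((-1 : ℤˣ) ^ (a * b) : ℤˣ) : ℤ) • gIns a b A B

/-- The set `S(n-1, p-1)` of unshuffle permutations of `{0,…,n-1}` which are
strictly increasing on the first `p` positions and on the remaining ones. -/
def Unshuffles (n p : ℕ) : Finset (Equiv.Perm (Fin n)) :=
  Finset.univ.filter fun σ =>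
    (∀ i j : Fin n, (i : ℕ) < (j : ℕ) → (j : ℕ) < p → σ i < σ j) ∧
    (∀ i j : Fin n, (i : ℕ) < (j : ℕ) → p ≤ (i : ℕ) → σ i < σ j)

/-- The Nijenhuis–Richardson insertion `i_B A` of the `nB`-ary `B` into the
`nA`-ary `A`:
`i_B A(x_0,…,x_{a+b}) = Σ_{σ ∈ S(a+b,b)} sgn(σ) ·
A(B(x_{σ(0)},…,x_{σ(b)}), x_{σ(b+1)},…,x_{σ(a+b)})`
(and `i_B A = 0` when `A` has degree `-1`, i.e. no argument slots). -/
def nrIns {V : Type*} [AddCommGroup V] (nA nB : ℕ) (A B : Op V) : Op V := fun x =>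
  if hA : nA = 0 then 0
  else
    ∑ σ ∈ Unshuffles (nA + nB - 1) nB,
      ((Equiv.Perm.sign σ : ℤˣ) : ℤ) •
        A fun j =>
          if hj0 : j = 0 then
            B fun i => if hi : i < nB then x (σ ⟨i, by omega⟩) else 0
          else if hj : j < nA then x (σ ⟨nB + j - 1, by omega⟩) else 0

/-- The Nijenhuis–Richardson bracket `[A,B]^{NR} = −i_A B + (−1)^{ab} i_B A`
of `A ∈ A^a(V)` and `B ∈ A^b(V)`. -/
def nrBracket {V : Type*} [AddCommGroup V] (a b : ℤ) (A B : Op V) : Op V :=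
  -(nrIns (ar b) (ar a) B A) +
    (((-1 : ℤˣ) ^ (a * b) : ℤˣ) : ℤ) • nrIns (ar a) (ar b) A B

/-- The wedge product `A∧B` of the `nA`-ary `A` and the `nB`-ary `B`
(over a commutative algebra `V`):
`(A∧B)(x_0,…,x_{a+b+1}) = Σ_σ sgn(σ) · A(x_{σ(0)},…,x_{σ(a)}) ·
B(x_{σ(a+1)},…,x_{σ(a+b+1)})` summed over unshuffles. -/
def wedge {V : Type*} [CommRing V] (nA nB : ℕ) (A B : Op V) : Op V := fun x =>
  ∑ σ ∈ Unshuffles (nA + nB) nA,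
    ((Equiv.Perm.sign σ : ℤˣ) : ℤ) •
      (A (fun i => if hi : i < nA then x (σ ⟨i, by omega⟩) else 0) *
        B fun j => if hj : j < nB then x (σ ⟨nA + j, by omega⟩) else 0)

/-- The argument sequence `v, x_0, x_1, …`. -/
def consV {V : Type*} (v : V) (x : ℕ → V) : ℕ → V := fun n =>
  if n = 0 then v else x (n - 1)

/-- The argument sequence `v, w, 0, 0, …` (for applying binary operations). -/
def duo {V : Type*} [Zero V] (v w : V) : ℕ → V := fun n =>
  if n = 0 then v else if n = 1 then w else 0

/-- Membership in `ADer^a(V)`: an alternating `(a+1)`-linear map which (for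
`a ≥ 0`) is a derivation in its first (hence, by skew-symmetry, in each)
argument; `ADer^{-1}(V) = V`. -/
def MemADer (k : Type*) {V : Type*} [CommRing k] [CommRing V] [Algebra k V]
    (a : ℤ) (A : Op V) : Prop :=
  IsMultilinearOn k (ar a) A ∧ IsAlternatingOn (ar a) A ∧
    (0 ≤ a → ∀ (f g : V) (x : ℕ → V),
      A (consV (f * g) x) = f * A (consV g x) + g * A (consV f x))

/-- Membership in `ADiff_1^a(V)`: an alternating `(a+1)`-linear map which (for
`a ≥ 0`) is a first-order differential operator in its first (hence in each)
argument; `ADiff_1^{-1}(V) = V`. -/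
def MemADiff1 (k : Type*) {V : Type*} [CommRing k] [CommRing V] [Algebra k V]
    (a : ℤ) (A : Op V) : Prop :=
  IsMultilinearOn k (ar a) A ∧ IsAlternatingOn (ar a) A ∧
    (0 ≤ a → ∀ (f g : V) (x : ℕ → V),
      A (consV (f * g) x) =
        f * A (consV g x) + g * A (consV f x) - f * g * A (consV 1 x))

/-- `D : V → V` is a differential operator of order `≤ n` on the commutative
algebra `V`. -/
def DiffOrderLe {V : Type*} [CommRing V] : ℕ → (V → V) → Prop
  | 0 => fun D => ∀ f x, D (f * x) = f * D x
  | n + 1 => fun D => ∀ f : V, DiffOrderLe n fun x => D (f * x) - f * D x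

/-- Membership in `ADiff^a(V)`: an alternating `(a+1)`-linear map which is a
differential operator of some finite order in each argument separately
(the other arguments being fixed); `ADiff^{-1}(V) = V`. -/
def MemADiff (k : Type*) {V : Type*} [CommRing k] [CommRing V] [Algebra k V]
    (a : ℤ) (A : Op V) : Prop :=
  IsMultilinearOn k (ar a) A ∧ IsAlternatingOn (ar a) A ∧
    ∀ i, i < ar a → ∃ n, ∀ x : ℕ → V,
      DiffOrderLe n fun v => A (Function.update x i v)

/-- The identity map `I ∈ A^0(V)`. -/
def Iop {V : Type*} : Op V := fun x => x 0

/-- The insertion `i_1 A` of the unit `1 ∈ V = A^{-1}(V)` into `A ∈ A^a(V)`;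
for `a ≥ 0` this is `A(1,·,…,·)`. -/
def iUnit {V : Type*} [CommRing V] (a : ℤ) (A : Op V) : Op V :=
  nrIns (ar a) 0 A fun _ => 1

/-- Application of a degree-0 (i.e. unary) operation to an element of `V`. -/
def app1 {V : Type*} (X : Op V) (v : V) : V := X fun _ => v

/-- The commutator `X∘Y − Y∘X` of two degree-0 operations. -/
def commOp {V : Type*} [AddCommGroup V] (X Y : Op V) : Op V := fun x =>
  app1 X (app1 Y (x 0)) - app1 Y (app1 X (x 0))

/-- The iterated wedge product `X_1 ∧ … ∧ X_m` of a list of degree-0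
operations (with the empty product being the unit `1 ∈ V = A^{-1}(V)`). -/
def wedgeList {V : Type*} [CommRing V] : List (Op V) → Op V
  | [] => fun _ => 1
  | X :: l => wedge 1 l.length X (wedgeList l)



section Helpers
variable {V : Type*} [CommRing V]

/-- Binary operation extracted from an `Op`. -/
def l2 (A : Op V) (a b : V) : V := A (duo a b)

/-- Unary operation extracted from an `Op`. -/
def l1 (A : Op V) (a : V) : V := A (fun _ => a)

lemma eval2 (A : Op V) (hA : DependsOn 2 A) (x : ℕ → V) : A x = l2 A (x 0) (x 1) := by
  apply hA; intro i hi; interval_cases i <;> simp [duo]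

lemma eval1 (A : Op V) (hA : DependsOn 1 A) (x : ℕ → V) : A x = l1 A (x 0) := by
  apply hA; intro i hi; interval_cases i <;> simp

lemma nrIns22_eval (A B : Op V) (hA : DependsOn 2 A) (hB : DependsOn 2 B) (x : ℕ → V) :
    nrIns 2 2 A B x =
      l2 A (l2 B (x 0) (x 1)) (x 2) - l2 A (l2 B (x 0) (x 2)) (x 1)
        + l2 A (l2 B (x 1) (x 2)) (x 0) := by
  rw [nrIns, dif_neg (by norm_num),
    show Unshuffles (2 + 2 - 1) 2 = {1, Equiv.swap 1 2, finRotate 3} from by decide,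
    Finset.sum_insert (by decide), Finset.sum_insert (by decide), Finset.sum_singleton]
  simp only [eval2 A hA, eval2 B hB]
  simp only [show ((finRotate 3 : Equiv.Perm (Fin 3)) ⟨0, by omega⟩ : ℕ) = 1 from by decide,
    show ((finRotate 3 : Equiv.Perm (Fin 3)) ⟨1, by omega⟩ : ℕ) = 2 from by decide,
    show ((finRotate 3 : Equiv.Perm (Fin 3)) ⟨2, by omega⟩ : ℕ) = 0 from by decide,
    show ((Equiv.swap (1:Fin 3) 2) ⟨0, by omega⟩ : ℕ) = 0 from by decide,
    show ((Equiv.swap (1:Fin 3) 2) ⟨1, by omega⟩ : ℕ) = 2 from by decide,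
    show ((Equiv.swap (1:Fin 3) 2) ⟨2, by omega⟩ : ℕ) = 1 from by decide,
    show ((1 : Equiv.Perm (Fin 3)) ⟨0, by omega⟩ : ℕ) = 0 from by decide,
    show ((1 : Equiv.Perm (Fin 3)) ⟨1, by omega⟩ : ℕ) = 1 from by decide,
    show ((1 : Equiv.Perm (Fin 3)) ⟨2, by omega⟩ : ℕ) = 2 from by decide,
    show ((finRotate 3 : Equiv.Perm (Fin 3)) (0 : Fin 3) : ℕ) = 1 from by decide,
    show ((finRotate 3 : Equiv.Perm (Fin 3)) (1 : Fin 3) : ℕ) = 2 from by decide,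
    show ((finRotate 3 : Equiv.Perm (Fin 3)) (2 : Fin 3) : ℕ) = 0 from by decide,
    show ((Equiv.swap (1:Fin 3) 2) (0 : Fin 3) : ℕ) = 0 from by decide,
    show ((Equiv.swap (1:Fin 3) 2) (1 : Fin 3) : ℕ) = 2 from by decide,
    show ((Equiv.swap (1:Fin 3) 2) (2 : Fin 3) : ℕ) = 1 from by decide]
  norm_num [show Equiv.Perm.sign (finRotate 3) = 1 from by decide,
    show Equiv.Perm.sign (Equiv.swap (1:Fin 3) 2) = -1 from by decide]
  ring

lemma fin2_facts :
    ((1 : Equiv.Perm (Fin 2)) (0 : Fin 2) : ℕ) = 0 ∧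
    ((1 : Equiv.Perm (Fin 2)) (1 : Fin 2) : ℕ) = 1 ∧
    ((Equiv.swap (0:Fin 2) 1) (0 : Fin 2) : ℕ) = 1 ∧
    ((Equiv.swap (0:Fin 2) 1) (1 : Fin 2) : ℕ) = 0 := by decide

lemma nrIns21_eval (A B : Op V) (hA : DependsOn 2 A) (hB : DependsOn 1 B) (x : ℕ → V) :
    nrIns 2 1 A B x = l2 A (l1 B (x 0)) (x 1) - l2 A (l1 B (x 1)) (x 0) := by
  rw [nrIns, dif_neg (by norm_num),
    show Unshuffles (2 + 1 - 1) 1 = {1, Equiv.swap 0 1} from by decide,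
    Finset.sum_insert (by decide), Finset.sum_singleton]
  simp only [eval2 A hA, eval1 B hB]
  simp only [show ((1 : Equiv.Perm (Fin 2)) ⟨0, by omega⟩ : ℕ) = 0 from by decide,
    show ((1 : Equiv.Perm (Fin 2)) ⟨1, by omega⟩ : ℕ) = 1 from by decide,
    show ((Equiv.swap (0:Fin 2) 1) ⟨0, by omega⟩ : ℕ) = 1 from by decide,
    show ((Equiv.swap (0:Fin 2) 1) ⟨1, by omega⟩ : ℕ) = 0 from by decide,
    show ((1 : Equiv.Perm (Fin 2)) (0 : Fin 2) : ℕ) = 0 from by decide,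
    show ((1 : Equiv.Perm (Fin 2)) (1 : Fin 2) : ℕ) = 1 from by decide,
    show ((Equiv.swap (0:Fin 2) 1) (0 : Fin 2) : ℕ) = 1 from by decide,
    show ((Equiv.swap (0:Fin 2) 1) (1 : Fin 2) : ℕ) = 0 from by decide]
  norm_num [show Equiv.Perm.sign (Equiv.swap (0:Fin 2) 1) = -1 from by decide]
  ring

lemma nrIns12_eval (A B : Op V) (hA : DependsOn 1 A) (hB : DependsOn 2 B) (x : ℕ → V) :
    nrIns 1 2 A B x = l1 A (l2 B (x 0) (x 1)) := by
  rw [nrIns, dif_neg (by norm_num),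
    show Unshuffles (1 + 2 - 1) 2 = {1} from by decide, Finset.sum_singleton]
  simp only [eval1 A hA, eval2 B hB]
  simp only [show ((1 : Equiv.Perm (Fin 2)) ⟨0, by omega⟩ : ℕ) = 0 from by decide,
    show ((1 : Equiv.Perm (Fin 2)) ⟨1, by omega⟩ : ℕ) = 1 from by decide]
  norm_num

lemma wedge21_eval (A B : Op V) (hA : DependsOn 2 A) (hB : DependsOn 1 B) (x : ℕ → V) :
    wedge 2 1 A B x =
      l2 A (x 0) (x 1) * l1 B (x 2) - l2 A (x 0) (x 2) * l1 B (x 1)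
        + l2 A (x 1) (x 2) * l1 B (x 0) := by
  rw [wedge,
    show Unshuffles (2 + 1) 2 = {1, Equiv.swap 1 2, finRotate 3} from by decide,
    Finset.sum_insert (by decide), Finset.sum_insert (by decide), Finset.sum_singleton]
  simp only [eval2 A hA, eval1 B hB]
  simp only [show ((finRotate 3 : Equiv.Perm (Fin 3)) ⟨0, by omega⟩ : ℕ) = 1 from by decide,
    show ((finRotate 3 : Equiv.Perm (Fin 3)) ⟨1, by omega⟩ : ℕ) = 2 from by decide,
    show ((finRotate 3 : Equiv.Perm (Fin 3)) ⟨2, by omega⟩ : ℕ) = 0 from by decide,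
    show ((Equiv.swap (1:Fin 3) 2) ⟨0, by omega⟩ : ℕ) = 0 from by decide,
    show ((Equiv.swap (1:Fin 3) 2) ⟨1, by omega⟩ : ℕ) = 2 from by decide,
    show ((Equiv.swap (1:Fin 3) 2) ⟨2, by omega⟩ : ℕ) = 1 from by decide,
    show ((1 : Equiv.Perm (Fin 3)) ⟨0, by omega⟩ : ℕ) = 0 from by decide,
    show ((1 : Equiv.Perm (Fin 3)) ⟨1, by omega⟩ : ℕ) = 1 from by decide,
    show ((1 : Equiv.Perm (Fin 3)) ⟨2, by omega⟩ : ℕ) = 2 from by decide]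
  norm_num [show Equiv.Perm.sign (finRotate 3) = 1 from by decide,
    show Equiv.Perm.sign (Equiv.swap (1:Fin 3) 2) = -1 from by decide]
  ring

lemma wedge11_eval (A B : Op V) (hA : DependsOn 1 A) (hB : DependsOn 1 B) (x : ℕ → V) :
    wedge 1 1 A B x = l1 A (x 0) * l1 B (x 1) - l1 A (x 1) * l1 B (x 0) := by
  rw [wedge,
    show Unshuffles (1 + 1) 1 = {1, Equiv.swap 0 1} from by decide,
    Finset.sum_insert (by decide), Finset.sum_singleton]
  simp only [eval1 A hA, eval1 B hB]
  simp only [show ((1 : Equiv.Perm (Fin 2)) ⟨0, by omega⟩ : ℕ) = 0 from by decide,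
    show ((1 : Equiv.Perm (Fin 2)) ⟨1, by omega⟩ : ℕ) = 1 from by decide,
    show ((Equiv.swap (0:Fin 2) 1) ⟨0, by omega⟩ : ℕ) = 1 from by decide,
    show ((Equiv.swap (0:Fin 2) 1) ⟨1, by omega⟩ : ℕ) = 0 from by decide,
    show ((1 : Equiv.Perm (Fin 2)) (0 : Fin 2) : ℕ) = 0 from by decide,
    show ((1 : Equiv.Perm (Fin 2)) (1 : Fin 2) : ℕ) = 1 from by decide,
    show ((Equiv.swap (0:Fin 2) 1) (0 : Fin 2) : ℕ) = 1 from by decide,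
    show ((Equiv.swap (0:Fin 2) 1) (1 : Fin 2) : ℕ) = 0 from by decide]
  norm_num [show Equiv.Perm.sign (Equiv.swap (0:Fin 2) 1) = -1 from by decide]
  ring

end Helpers

section Alg
variable {k V : Type*} [Field k] [CharZero k] [CommRing V] [Algebra k V]
variable {Λ Γ : Op V}

lemma ar1 : ar 1 = 2 := rfl
lemma ar0 : ar 0 = 1 := rfl

lemma dep2 (hΛ : MemADer k 1 Λ) : DependsOn 2 Λ := hΛ.1.1
lemma dep1 (hΓ : MemADer k 0 Γ) : DependsOn 1 Γ := hΓ.1.1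

lemma lam_add_left (hΛ : MemADer k 1 Λ) (a a' b : V) :
    l2 Λ (a + a') b = l2 Λ a b + l2 Λ a' b := by
  have h := (hΛ.1.2 0 (by norm_num [ar1])).2 (duo 0 b) a a'
  simp only [eval2 Λ (dep2 hΛ)] at h
  simpa [Function.update_apply, duo] using h

lemma lam_add_right (hΛ : MemADer k 1 Λ) (a b b' : V) :
    l2 Λ a (b + b') = l2 Λ a b + l2 Λ a b' := by
  have h := (hΛ.1.2 1 (by norm_num [ar1])).2 (duo a 0) b b'
  simp only [eval2 Λ (dep2 hΛ)] at h
  simpa [Function.update_apply, duo] using h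

lemma lam_zero_left (hΛ : MemADer k 1 Λ) (b : V) : l2 Λ 0 b = 0 := by
  have h := (hΛ.1.2 0 (by norm_num [ar1])).1 (duo 0 b) (0 : k) 0
  simp only [eval2 Λ (dep2 hΛ)] at h
  simpa [Function.update_apply, duo] using h

lemma lam_zero_right (hΛ : MemADer k 1 Λ) (a : V) : l2 Λ a 0 = 0 := by
  have h := (hΛ.1.2 1 (by norm_num [ar1])).1 (duo a 0) (0 : k) 0
  simp only [eval2 Λ (dep2 hΛ)] at h
  simpa [Function.update_apply, duo] using h

lemma lam_neg_left (hΛ : MemADer k 1 Λ) (a b : V) : l2 Λ (-a) b = -l2 Λ a b := by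
  have h : l2 Λ (a + -a) b = _ := lam_add_left hΛ a (-a) b
  rw [add_neg_cancel, lam_zero_left hΛ] at h
  linear_combination -h

lemma lam_neg_right (hΛ : MemADer k 1 Λ) (a b : V) : l2 Λ a (-b) = -l2 Λ a b := by
  have h : l2 Λ a (b + -b) = _ := lam_add_right hΛ a b (-b)
  rw [add_neg_cancel, lam_zero_right hΛ] at h
  linear_combination -h

lemma lam_self (hΛ : MemADer k 1 Λ) (a : V) : l2 Λ a a = 0 := by
  have h := hΛ.2.1 (duo a a) 0 1 (by norm_num [ar1]) (by norm_num [ar1]) (by norm_num)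
    (by simp [duo])
  simpa [l2] using h

lemma lam_swap (hΛ : MemADer k 1 Λ) (a b : V) : l2 Λ b a = -l2 Λ a b := by
  have h := hΛ.2.1 (duo (a + b) (a + b)) 0 1 (by norm_num [ar1]) (by norm_num [ar1])
    (by norm_num) (by simp [duo])
  have h2 : l2 Λ (a + b) (a + b) = 0 := h
  rw [lam_add_left hΛ, lam_add_right hΛ, lam_add_right hΛ, lam_self hΛ, lam_self hΛ] at h2
  linear_combination h2

lemma lam_mul_left (hΛ : MemADer k 1 Λ) (f g c : V) :
    l2 Λ (f * g) c = f * l2 Λ g c + g * l2 Λ f c := by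
  have h := hΛ.2.2 (by norm_num) f g (fun _ => c)
  simp only [eval2 Λ (dep2 hΛ)] at h
  simpa [consV] using h

lemma lam_mul_right (hΛ : MemADer k 1 Λ) (c f g : V) :
    l2 Λ c (f * g) = f * l2 Λ c g + g * l2 Λ c f := by
  rw [lam_swap hΛ (f*g) c, lam_mul_left hΛ, lam_swap hΛ c g, lam_swap hΛ c f]
  ring

lemma lam_one_left (hΛ : MemADer k 1 Λ) (c : V) : l2 Λ 1 c = 0 := by
  have h := lam_mul_left hΛ 1 1 c
  simp at h
  linear_combination h

lemma lam_one_right (hΛ : MemADer k 1 Λ) (c : V) : l2 Λ c 1 = 0 := by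
  rw [lam_swap hΛ, lam_one_left hΛ, neg_zero]

lemma gam_add (hΓ : MemADer k 0 Γ) (v w : V) : l1 Γ (v + w) = l1 Γ v + l1 Γ w := by
  have h := (hΓ.1.2 0 (by norm_num [ar0])).2 (fun _ => (0:V)) v w
  simp only [eval1 Γ (dep1 hΓ)] at h
  simpa [Function.update_apply] using h

lemma gam_zero (hΓ : MemADer k 0 Γ) : l1 Γ (0 : V) = 0 := by
  have h := (hΓ.1.2 0 (by norm_num [ar0])).1 (fun _ => (0:V)) (0 : k) 0
  simp only [eval1 Γ (dep1 hΓ)] at h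
  simpa [Function.update_apply] using h

lemma gam_neg (hΓ : MemADer k 0 Γ) (v : V) : l1 Γ (-v) = -l1 Γ v := by
  have h := gam_add hΓ v (-v)
  rw [add_neg_cancel, gam_zero hΓ] at h
  linear_combination -h

lemma gam_sub (hΓ : MemADer k 0 Γ) (v w : V) : l1 Γ (v - w) = l1 Γ v - l1 Γ w := by
  rw [sub_eq_add_neg, gam_add hΓ, gam_neg hΓ]; ring

lemma gam_mul (hΓ : MemADer k 0 Γ) (f g : V) : l1 Γ (f * g) = f * l1 Γ g + g * l1 Γ f := by
  have h := hΓ.2.2 le_rfl f g (fun _ => 0)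
  simp only [eval1 Γ (dep1 hΓ)] at h
  simpa [consV] using h

lemma gam_one (hΓ : MemADer k 0 Γ) : l1 Γ (1 : V) = 0 := by
  have h := gam_mul hΓ 1 1
  simp at h
  linear_combination h

lemma lam_sub_left (hΛ : MemADer k 1 Λ) (a a' b : V) :
    l2 Λ (a - a') b = l2 Λ a b - l2 Λ a' b := by
  rw [sub_eq_add_neg, lam_add_left hΛ, lam_neg_left hΛ]; ring

lemma lam_sub_right (hΛ : MemADer k 1 Λ) (a b b' : V) :
    l2 Λ a (b - b') = l2 Λ a b - l2 Λ a b' := by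
  rw [sub_eq_add_neg, lam_add_right hΛ, lam_neg_right hΛ]; ring


/-- The bracket `{f,g} = Λ(f,g) + f·Γ(g) − g·Γ(f)`. -/
def jbOf (Λ Γ : Op V) (f g : V) : V := l2 Λ f g + f * l1 Γ g - g * l1 Γ f

/-- `[Γ,Λ]^{NR}` evaluated at a pair. -/
def Dop (Λ Γ : Op V) (f g : V) : V :=
  l1 Γ (l2 Λ f g) - l2 Λ (l1 Γ f) g + l2 Λ (l1 Γ g) f

/-- `i_Λ Λ − Λ∧Γ` evaluated at a triple. -/
def Eop (Λ Γ : Op V) (f g h : V) : V :=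
  l2 Λ (l2 Λ f g) h - l2 Λ (l2 Λ f h) g + l2 Λ (l2 Λ g h) f
    - l2 Λ f g * l1 Γ h + l2 Λ f h * l1 Γ g - l2 Λ g h * l1 Γ f

lemma step (hΛ : MemADer k 1 Λ) (hΓ : MemADer k 0 Γ) (f g h : V) :
    jbOf Λ Γ (jbOf Λ Γ f g) h =
      l2 Λ (l2 Λ f g) h + f * l2 Λ (l1 Γ g) h - g * l2 Λ (l1 Γ f) h
        + l1 Γ g * l2 Λ f h - l1 Γ f * l2 Λ g h
        + l2 Λ f g * l1 Γ h + f * l1 Γ g * l1 Γ h - g * l1 Γ f * l1 Γ h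
        - h * l1 Γ (l2 Λ f g) - h * f * l1 Γ (l1 Γ g) + h * g * l1 Γ (l1 Γ f) := by
  simp only [jbOf, lam_add_left hΛ, lam_sub_left hΛ, lam_mul_left hΛ,
    gam_add hΓ, gam_sub hΓ, gam_mul hΓ]
  ring

lemma key (hΛ : MemADer k 1 Λ) (hΓ : MemADer k 0 Γ) (f g h : V) :
    jbOf Λ Γ (jbOf Λ Γ f g) h + jbOf Λ Γ (jbOf Λ Γ g h) f + jbOf Λ Γ (jbOf Λ Γ h f) g =
      Eop Λ Γ f g h - (h * Dop Λ Γ f g + f * Dop Λ Γ g h + g * Dop Λ Γ h f) := by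
  rw [step hΛ hΓ f g h, step hΛ hΓ g h f, step hΛ hΓ h f g]
  simp only [Dop, Eop]
  rw [show l2 Λ g f = -l2 Λ f g from lam_swap hΛ f g,
    show l2 Λ h f = -l2 Λ f h from lam_swap hΛ f h,
    show l2 Λ h g = -l2 Λ g h from lam_swap hΛ g h]
  simp only [lam_neg_left hΛ, lam_neg_right hΛ, gam_neg hΓ]
  ring

lemma jb_swap (hΛ : MemADer k 1 Λ) (a b : V) : jbOf Λ Γ b a = -jbOf Λ Γ a b := by
  simp only [jbOf, lam_swap hΛ a b]
  ring

lemma jb_neg_left (hΛ : MemADer k 1 Λ) (hΓ : MemADer k 0 Γ) (a b : V) :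
    jbOf Λ Γ (-a) b = -jbOf Λ Γ a b := by
  simp only [jbOf, lam_neg_left hΛ, gam_neg hΓ]
  ring

end Alg

/-- The argument sequence `f, g, h, h, h, …`. -/
def trio {V : Type*} (f g h : V) : ℕ → V := fun n =>
  if n = 0 then f else if n = 1 then g else h

@[simp] lemma trio0 {V : Type*} (f g h : V) : trio f g h 0 = f := rfl
@[simp] lemma trio1 {V : Type*} (f g h : V) : trio f g h 1 = g := rfl
@[simp] lemma trio2 {V : Type*} (f g h : V) : trio f g h 2 = h := rfl


/-- for a biderivation `Λ ∈ ADer^1(V)` and a derivation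
`Γ ∈ ADer^0(V)`, the bracket `{f,g} = Λ(f,g) + f·Γ(g) − g·Γ(f)`
(i.e. `Λ + I∧Γ`) is a Lie bracket on `V` (equivalently
`[Λ + I∧Γ, Λ + I∧Γ]^{NR} = 0`) iff `[Γ,Λ]^{NR} = 0` and
`[Λ,Λ]^{NR} = −2·Λ∧Γ`. -/
theorem statement15 (k V : Type*) [Field k] [CharZero k]
    [CommRing V] [Algebra k V]
    (Λ Γ : Op V) (hΛ : MemADer k 1 Λ) (hΓ : MemADer k 0 Γ)
    (Jb : V → V → V)
    (hJb : ∀ f g : V, Jb f g = Λ (duo f g) + f * app1 Γ g - g * app1 Γ f) :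
    ((∀ f g h : V, Jb (Jb f g) h + Jb (Jb g h) f + Jb (Jb h f) g = 0) ↔
      (nrBracket 0 1 Γ Λ = 0 ∧
        nrBracket 1 1 Λ Λ = (-2 : ℤ) • wedge 2 1 Λ Γ)) ∧
    ((nrBracket 1 1 (Λ + wedge 1 1 Iop Γ) (Λ + wedge 1 1 Iop Γ) = 0) ↔
      (nrBracket 0 1 Γ Λ = 0 ∧
        nrBracket 1 1 Λ Λ = (-2 : ℤ) • wedge 2 1 Λ Γ)) := by
  have hdΛ : DependsOn 2 Λ := hΛ.1.1
  have hdΓ : DependsOn 1 Γ := hΓ.1.1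
  have hJb' : ∀ f g, Jb f g = jbOf Λ Γ f g := fun f g => by rw [hJb]; rfl
  have h2 : ∀ a b : V, a + a = b + b → a = b := by
    intro a b hab
    have hu : IsUnit (2 : V) := by
      have h1 : IsUnit ((2 : k)) := isUnit_iff_ne_zero.2 two_ne_zero
      have := h1.map (algebraMap k V)
      rwa [map_ofNat] at this
    have hm : (2 : V) * a = (2 : V) * b := by ring_nf; linear_combination hab
    exact hu.mul_left_cancel hm
  have valD : ∀ x : ℕ → V, nrBracket 0 1 Γ Λ x = Dop Λ Γ (x 0) (x 1) := by
    intro x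
    have e : nrBracket 0 1 Γ Λ x
        = -(nrIns 2 1 Λ Γ x)
          + (((-1 : ℤˣ) ^ ((0 : ℤ) * 1) : ℤˣ) : ℤ) • nrIns 1 2 Γ Λ x := rfl
    rw [e, nrIns21_eval Λ Γ hdΛ hdΓ, nrIns12_eval Γ Λ hdΓ hdΛ]
    norm_num [Dop]
    ring
  have valN : ∀ (A : Op V) (x : ℕ → V),
      nrBracket 1 1 A A x = -(nrIns 2 2 A A x) - nrIns 2 2 A A x := by
    intro A x
    have e : nrBracket 1 1 A A x
        = -(nrIns 2 2 A A x)
          + (((-1 : ℤˣ) ^ ((1 : ℤ) * 1) : ℤˣ) : ℤ) • nrIns 2 2 A A x := rfl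
    rw [e]
    norm_num
    ring
  have valW : ∀ x : ℕ → V,
      ((-2 : ℤ) • wedge 2 1 Λ Γ) x = -(wedge 2 1 Λ Γ x) - wedge 2 1 Λ Γ x := by
    intro x
    have e : ((-2 : ℤ) • wedge 2 1 Λ Γ) x = (-2 : ℤ) • (wedge 2 1 Λ Γ x) := rfl
    rw [e]
    have : ((-2 : ℤ)) • (wedge 2 1 Λ Γ x) = -((2 : ℤ) • (wedge 2 1 Λ Γ x)) := by
      rw [neg_smul]
    rw [this, two_zsmul]
    ring
  have hC1 : (nrBracket 0 1 Γ Λ = 0) ↔ (∀ f g, Dop Λ Γ f g = 0) := by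
    constructor
    · intro hE f g
      have := congrFun hE (duo f g)
      rw [valD] at this
      simpa [duo] using this
    · intro hD
      funext x
      rw [valD x, hD]
      simp
  have hNW : ∀ x : ℕ → V,
      nrIns 2 2 Λ Λ x - wedge 2 1 Λ Γ x = Eop Λ Γ (x 0) (x 1) (x 2) := by
    intro x
    rw [nrIns22_eval Λ Λ hdΛ hdΛ, wedge21_eval Λ Γ hdΛ hdΓ]
    simp only [Eop]
    ring
  have hC2 : (nrBracket 1 1 Λ Λ = (-2 : ℤ) • wedge 2 1 Λ Γ) ↔
      (∀ f g h, Eop Λ Γ f g h = 0) := by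
    constructor
    · intro hE f g h
      have h0 := congrFun hE (trio f g h)
      rw [valN, valW] at h0
      have h1 : nrIns 2 2 Λ Λ (trio f g h) = wedge 2 1 Λ Γ (trio f g h) := by
        apply h2
        linear_combination -h0
      have h3 := hNW (trio f g h)
      rw [h1, sub_self] at h3
      simpa using h3.symm
    · intro hE
      funext x
      rw [valN Λ x, valW x]
      have h0 : nrIns 2 2 Λ Λ x = wedge 2 1 Λ Γ x := by
        have := hNW x
        rw [hE] at this
        linear_combination this
      rw [h0]
  have main : (∀ f g h : V, Jb (Jb f g) h + Jb (Jb g h) f + Jb (Jb h f) g = 0) ↔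
      ((∀ f g, Dop Λ Γ f g = 0) ∧ (∀ f g h, Eop Λ Γ f g h = 0)) := by
    constructor
    · intro hJ
      have hJ' : ∀ f g h : V,
          jbOf Λ Γ (jbOf Λ Γ f g) h + jbOf Λ Γ (jbOf Λ Γ g h) f
            + jbOf Λ Γ (jbOf Λ Γ h f) g = 0 := by
        intro f g h
        have := hJ f g h
        simpa only [hJb'] using this
      have hD : ∀ f g, Dop Λ Γ f g = 0 := by
        intro g h
        have hk := key hΛ hΓ 1 g h
        rw [hJ' 1 g h] at hk
        have e1 : Eop Λ Γ 1 g h = 0 := by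
          simp only [Eop, lam_one_left hΛ, lam_one_right hΛ, lam_zero_left hΛ, gam_one hΓ]
          ring
        have e2 : Dop Λ Γ 1 g = 0 := by
          simp only [Dop, lam_one_left hΛ, lam_one_right hΛ, gam_one hΓ, lam_zero_left hΛ,
            gam_zero hΓ]
          ring
        have e3 : Dop Λ Γ h 1 = 0 := by
          simp only [Dop, lam_one_left hΛ, lam_one_right hΛ, gam_one hΓ, lam_zero_left hΛ,
            gam_zero hΓ]
          ring
        linear_combination hk + e1 - h * e2 - g * e3
      refine ⟨hD, ?_⟩
      intro f g h
      have hk := key hΛ hΓ f g h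
      rw [hJ' f g h, hD f g, hD g h, hD h f] at hk
      linear_combination -hk
    · rintro ⟨hD, hE⟩ f g h
      simp only [hJb']
      rw [key hΛ hΓ f g h, hE f g h, hD f g, hD g h, hD h f]
      ring
  have hdI : DependsOn 1 (Iop : Op V) := by
    intro x y hxy
    simp [Iop, hxy 0 (by norm_num)]
  have hdW : DependsOn 2 (wedge 1 1 Iop Γ) := by
    intro x y hxy
    rw [wedge11_eval Iop Γ hdI hdΓ x, wedge11_eval Iop Γ hdI hdΓ y,
      hxy 0 (by norm_num), hxy 1 (by norm_num)]
  have hdP : DependsOn 2 (Λ + wedge 1 1 Iop Γ) := by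
    intro x y hxy
    simp only [Pi.add_apply]
    rw [hdΛ x y hxy, hdW x y hxy]
  have valP : ∀ a b : V, l2 (Λ + wedge 1 1 Iop Γ) a b = jbOf Λ Γ a b := by
    intro a b
    show Λ (duo a b) + wedge 1 1 Iop Γ (duo a b) = _
    rw [wedge11_eval Iop Γ hdI hdΓ]
    simp [duo, jbOf, l2, l1, Iop]
    ring
  have comb : ∀ f g h : V, Jb (Jb f g) h + Jb (Jb g h) f + Jb (Jb h f) g
      = jbOf Λ Γ (jbOf Λ Γ f g) h - jbOf Λ Γ (jbOf Λ Γ f h) g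
        + jbOf Λ Γ (jbOf Λ Γ g h) f := by
    intro f g h
    simp only [hJb']
    rw [show jbOf Λ Γ h f = -jbOf Λ Γ f h from jb_swap hΛ f h, jb_neg_left hΛ hΓ]
    ring
  have hPiff : (nrBracket 1 1 (Λ + wedge 1 1 Iop Γ) (Λ + wedge 1 1 Iop Γ) = 0) ↔
      (∀ f g h : V, Jb (Jb f g) h + Jb (Jb g h) f + Jb (Jb h f) g = 0) := by
    constructor
    · intro hE f g h
      have h0 := congrFun hE (trio f g h)
      rw [valN] at h0
      simp only [Pi.zero_apply] at h0
      have h1 : nrIns 2 2 (Λ + wedge 1 1 Iop Γ) (Λ + wedge 1 1 Iop Γ) (trio f g h) = 0 := by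
        apply h2 _ 0
        rw [add_zero]
        linear_combination -h0
      rw [comb]
      have he := nrIns22_eval _ _ hdP hdP (trio f g h)
      rw [h1] at he
      simp only [valP, trio0, trio1, trio2] at he
      linear_combination -he
    · intro hJ
      funext x
      rw [valN _ x]
      have he := nrIns22_eval _ _ hdP hdP x
      simp only [valP] at he
      have h0 : nrIns 2 2 (Λ + wedge 1 1 Iop Γ) (Λ + wedge 1 1 Iop Γ) x = 0 := by
        rw [he, ← comb (x 0) (x 1) (x 2), hJ]
      rw [h0]
      simp
  exact ⟨main.trans (and_congr hC1.symm hC2.symm),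
    hPiff.trans (main.trans (and_congr hC1.symm hC2.symm))⟩

end JacobiRevisited
end
end

section
/- Let (𝒜, ∧, [·,·]) be a Gerstenhaber algebra over a field k of characteristic zero and let D : 𝒜 → 𝒜 be a k-linear map of degree −1 (D(𝒜^n) ⊆ 𝒜^{n−1}) satisfying D∘D = 0, D(X∧Y) = D(X)∧Y + (−1)^{x+1} X∧D(Y), and D([X,Y]) = [D(X),Y] + (−1)^x [X,D(Y)] for all homogeneous X ∈ 𝒜^x, Y ∈ 𝒜^y. Then for every scalar h ∈ k, the deformed bracket [X,Y]^{hD} := [X,Y] + h·(x·X∧D(Y) − (−1)^x y·D(X)∧Y) is graded skew-symmetric ([X,Y]^{hD} = −(−1)^{xy}[Y,X]^{hD}) and satisfies the graded Jacobi identity [[X,Y]^{hD},Z]^{hD} = [X,[Y,Z]^{hD}]^{hD} − (−1)^{xy}[Y,[X,Z]^{hD}]^{hD}; in particular [·,·] and [X,Y]_0 := x·X∧D(Y) − (−1)^x y·D(X)∧Y are compatible graded Lie brackets. -/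
/-!
Write `[X,Y]_0 = x·X∧D(Y) − (−1)^x y·D(X)∧Y`, so that `[·,·]^{hD} = [·,·] + h·[·,·]_0`.
Both summands are graded skew-symmetric, and the Jacobi identity of the sum splits by powers
of `h` into the Jacobi identities of `[·,·]` and of `[·,·]_0` and a mixed identity in between.
For `[·,·]_0` the key point is `D[X,Y]_0 = (x − y)·D(X)∧D(Y)`, which comes from `D² = 0`; the
mixed identity follows from the Leibniz rules of `[·,·]` over `∧` on either side and from `D`
being a derivation of `[·,·]`. Expanded into `∧`-monomials, each identity becomes a comparison of
signed coefficients, and the signs depend only on the parities of the degrees.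
-/

noncomputable section

namespace JacobiRevisited17

/-- The deformed bracket `[X,Y]^{hD} = [X,Y] + h·(x·X∧D(Y) − (−1)^x y·D(X)∧Y)`
of elements `X`, `Y` of degrees `x`, `y`. -/
def brD {k 𝒜 : Type*} [Field k] [AddCommGroup 𝒜] [Module k 𝒜]
    (br wg : 𝒜 →ₗ[k] 𝒜 →ₗ[k] 𝒜) (D : 𝒜 →ₗ[k] 𝒜) (h : k)
    (x y : ℤ) (X Y : 𝒜) : 𝒜 :=
  br X Y +
    h • (x • wg X (D Y) - ((((-1 : ℤˣ) ^ x : ℤˣ) : ℤ) * y) • wg (D X) Y)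

local notation "ε(" n ")" => (((-1 : ℤˣ) ^ (n) : ℤˣ) : ℤ)

theorem coe_neg_one_zpow_eq_ite (n : ℤ) : ε(n) = if Even n then 1 else -1 := by
  rw [neg_one_zpow_eq_ite]
  split_ifs <;> rfl

section

variable {k 𝒜 : Type*} [CommRing k] [AddCommGroup 𝒜] [Module k 𝒜]

/- Brackets are families indexed by the degrees of their arguments: `[·,·]_0` depends on them,
and `𝒜` is not assumed to be the direct sum of the `G n`. -/
structure IsGradedLieBracket (G : ℤ → Submodule k 𝒜) (B : ℤ → ℤ → 𝒜 →ₗ[k] 𝒜 →ₗ[k] 𝒜) :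
    Prop where
  skew {x y : ℤ} {X Y : 𝒜} : X ∈ G x → Y ∈ G y → B x y X Y = -(ε(x * y) • B y x Y X)
  jacobi {x y z : ℤ} {X Y Z : 𝒜} : X ∈ G x → Y ∈ G y → Z ∈ G z →
    B (x + y) z (B x y X Y) Z = B x (y + z) X (B y z Y Z) - ε(x * y) • B y (x + z) Y (B x z X Z)

def MixedJacobi (G : ℤ → Submodule k 𝒜) (B C : ℤ → ℤ → 𝒜 →ₗ[k] 𝒜 →ₗ[k] 𝒜) : Prop :=
  ∀ ⦃x y z : ℤ⦄ ⦃X Y Z : 𝒜⦄, X ∈ G x → Y ∈ G y → Z ∈ G z →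
    B (x + y) z (C x y X Y) Z + C (x + y) z (B x y X Y) Z =
      B x (y + z) X (C y z Y Z) + C x (y + z) X (B y z Y Z) -
        ε(x * y) • (B y (x + z) Y (C x z X Z) + C y (x + z) Y (B x z X Z))

structure IsGradedCommProduct (G : ℤ → Submodule k 𝒜) (wg : 𝒜 →ₗ[k] 𝒜 →ₗ[k] 𝒜) : Prop where
  mem {x y : ℤ} {X Y : 𝒜} : X ∈ G x → Y ∈ G y → wg X Y ∈ G (x + y + 1)
  assoc (X Y Z : 𝒜) : wg (wg X Y) Z = wg X (wg Y Z)
  comm {x y : ℤ} {X Y : 𝒜} : X ∈ G x → Y ∈ G y → wg X Y = ε((x + 1) * (y + 1)) • wg Y X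

structure IsGerstenhaber (G : ℤ → Submodule k 𝒜) (br wg : 𝒜 →ₗ[k] 𝒜 →ₗ[k] 𝒜) : Prop
    extends IsGradedCommProduct G wg where
  br_mem {x y : ℤ} {X Y : 𝒜} : X ∈ G x → Y ∈ G y → br X Y ∈ G (x + y)
  isGradedLieBracket : IsGradedLieBracket G fun _ _ => br
  br_wg_right {x y z : ℤ} {X Y Z : 𝒜} : X ∈ G x → Y ∈ G y → Z ∈ G z →
    br X (wg Y Z) = wg (br X Y) Z + ε(x * (y + 1)) • wg Y (br X Z)

structure IsDifferential (G : ℤ → Submodule k 𝒜) (wg : 𝒜 →ₗ[k] 𝒜 →ₗ[k] 𝒜) (D : 𝒜 →ₗ[k] 𝒜) :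
    Prop where
  mem {n : ℤ} {X : 𝒜} : X ∈ G n → D X ∈ G (n - 1)
  sq_zero (X : 𝒜) : D (D X) = 0
  map_wg {x y : ℤ} {X Y : 𝒜} : X ∈ G x → Y ∈ G y →
    D (wg X Y) = wg (D X) Y + ε(x + 1) • wg X (D Y)

def deformationBracket (wg : 𝒜 →ₗ[k] 𝒜 →ₗ[k] 𝒜) (D : 𝒜 →ₗ[k] 𝒜) (x y : ℤ) :
    𝒜 →ₗ[k] 𝒜 →ₗ[k] 𝒜 :=
  x • wg.compl₂ D - (ε(x) * y) • wg ∘ₗ D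

theorem deformationBracket_apply (wg : 𝒜 →ₗ[k] 𝒜 →ₗ[k] 𝒜) (D : 𝒜 →ₗ[k] 𝒜) (x y : ℤ)
    (X Y : 𝒜) : deformationBracket wg D x y X Y = x • wg X (D Y) - (ε(x) * y) • wg (D X) Y :=
  rfl

variable {G : ℤ → Submodule k 𝒜} {br wg : 𝒜 →ₗ[k] 𝒜 →ₗ[k] 𝒜} {D : 𝒜 →ₗ[k] 𝒜}

theorem IsGradedLieBracket.add_smul {B C : ℤ → ℤ → 𝒜 →ₗ[k] 𝒜 →ₗ[k] 𝒜}
    (hB : IsGradedLieBracket G B) (hC : IsGradedLieBracket G C) (hBC : MixedJacobi G B C)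
    (c : k) : IsGradedLieBracket G fun x y => B x y + c • C x y where
  skew hX hY := by
    simp only [LinearMap.add_apply, LinearMap.smul_apply, hB.skew hX hY, hC.skew hX hY]
    module
  jacobi hX hY hZ := by
    simp only [LinearMap.add_apply, LinearMap.smul_apply, map_add, map_smul]
    linear_combination (norm := module) hB.jacobi hX hY hZ + c • hBC hX hY hZ +
      (c * c) • hC.jacobi hX hY hZ

theorem IsGradedCommProduct.left_comm (hP : IsGradedCommProduct G wg) {a b : ℤ} {A B : 𝒜}
    (hA : A ∈ G a) (hB : B ∈ G b) (C : 𝒜) :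
    wg A (wg B C) = ε((a + 1) * (b + 1)) • wg B (wg A C) := by
  rw [← hP.assoc, hP.comm hA hB, map_zsmul, LinearMap.smul_apply, hP.assoc]

theorem IsDifferential.map_deformationBracket (hD : IsDifferential G wg D) {x y : ℤ}
    {X Y : 𝒜} (hX : X ∈ G x) (hY : Y ∈ G y) :
    D (deformationBracket wg D x y X Y) = (x - y) • wg (D X) (D Y) := by
  rw [deformationBracket_apply, map_sub, map_zsmul, map_zsmul, hD.map_wg hX (hD.mem hY),
    hD.map_wg (hD.mem hX) hY, sub_add_cancel]
  simp only [hD.sq_zero, map_zero, LinearMap.zero_apply, smul_zero, add_zero, zero_add]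
  match_scalars
  linear_combination -y * Int.units_coe_mul_self ((-1) ^ x)

theorem isGradedLieBracket_deformationBracket (hP : IsGradedCommProduct G wg)
    (hD : IsDifferential G wg D) : IsGradedLieBracket G (deformationBracket wg D) where
  skew {x y X Y} hX hY := by
    rw [deformationBracket_apply, deformationBracket_apply, hP.comm hY (hD.mem hX),
      hP.comm (hD.mem hY) hX]
    match_scalars <;> by_cases hx : Even x <;> by_cases hy : Even y <;>
      simp [coe_neg_one_zpow_eq_ite, Int.even_mul, ← Int.not_even_iff_odd, hx, hy]
  jacobi {x y z X Y Z} hX hY hZ := by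
    rw [deformationBracket_apply _ _ (x + y) z, hD.map_deformationBracket hX hY,
      deformationBracket_apply _ _ x (y + z), hD.map_deformationBracket hY hZ,
      deformationBracket_apply _ _ y (x + z), hD.map_deformationBracket hX hZ]
    simp only [deformationBracket_apply, map_sub, map_zsmul, LinearMap.sub_apply,
      LinearMap.smul_apply, hP.assoc, hP.left_comm hY (hD.mem hX),
      hP.left_comm (hD.mem hY) hX, hP.left_comm (hD.mem hY) (hD.mem hX)]
    match_scalars <;> by_cases hx : Even x <;> by_cases hy : Even y <;>
      simp [coe_neg_one_zpow_eq_ite, Int.even_add, Int.even_mul, ← Int.not_even_iff_odd, hx, hy] <;>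
      ring

theorem IsGerstenhaber.br_wg_left (hA : IsGerstenhaber G br wg) {x y z : ℤ} {X Y Z : 𝒜}
    (hX : X ∈ G x) (hY : Y ∈ G y) (hZ : Z ∈ G z) :
    br (wg X Y) Z = wg X (br Y Z) + ε((y + 1) * z) • wg (br X Z) Y := by
  rw [hA.isGradedLieBracket.skew (hA.mem hX hY) hZ, hA.br_wg_right hZ hX hY,
    hA.isGradedLieBracket.skew hZ hX, hA.isGradedLieBracket.skew hZ hY]
  simp only [map_neg, map_zsmul, LinearMap.neg_apply, LinearMap.smul_apply]
  match_scalars <;> by_cases hx : Even x <;> by_cases hy : Even y <;> by_cases hz : Even z <;>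
    simp [coe_neg_one_zpow_eq_ite, Int.even_add, Int.even_mul, ← Int.not_even_iff_odd, hx, hy, hz]

theorem mixedJacobi_deformationBracket (hA : IsGerstenhaber G br wg)
    (hD_mem : ∀ {n : ℤ} {X : 𝒜}, X ∈ G n → D X ∈ G (n - 1))
    (hD_br : ∀ {x y : ℤ} {X Y : 𝒜}, X ∈ G x → Y ∈ G y →
      D (br X Y) = br (D X) Y + ε(x) • br X (D Y)) :
    MixedJacobi G (fun _ _ => br) (deformationBracket wg D) := by
  intro x y z X Y Z hX hY hZ
  have hDX := hD_mem hX
  have hDY := hD_mem hY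
  have hDZ := hD_mem hZ
  simp only [deformationBracket_apply, map_add, map_sub, map_neg, map_zsmul, LinearMap.add_apply,
    LinearMap.sub_apply, LinearMap.neg_apply, LinearMap.smul_apply,
    hD_br hX hY, hD_br hY hZ, hD_br hX hZ,
    hA.br_wg_left hX hDY hZ, hA.br_wg_left hDX hY hZ,
    hA.br_wg_right hX hY hDZ, hA.br_wg_right hX hDY hZ,
    hA.br_wg_right hY hX hDZ, hA.br_wg_right hY hDX hZ,
    hA.isGradedLieBracket.skew hY hX, hA.isGradedLieBracket.skew hY hDX,
    hA.comm hDY (hA.br_mem hX hZ), hA.comm hY (hA.br_mem hDX hZ)]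
  match_scalars <;> by_cases hx : Even x <;> by_cases hy : Even y <;> by_cases hz : Even z <;>
    simp [coe_neg_one_zpow_eq_ite, Int.even_add, Int.even_mul, ← Int.not_even_iff_odd, hx, hy,
      hz] <;> ring

end

theorem statement17_general (k : Type*) [Field k]
    (𝒜 : Type*) [AddCommGroup 𝒜] [Module k 𝒜]
    -- the grading
    (G : ℤ → Submodule k 𝒜)
    -- the (bilinear) graded Lie bracket and associative product
    (br wg : 𝒜 →ₗ[k] 𝒜 →ₗ[k] 𝒜)
    -- Gerstenhaber algebra axioms (for homogeneous elements)
    (hbr_grade : ∀ (x y : ℤ) (X Y : 𝒜), X ∈ G x → Y ∈ G y → br X Y ∈ G (x + y))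
    (hbr_skew : ∀ (x y : ℤ) (X Y : 𝒜), X ∈ G x → Y ∈ G y →
      br X Y = -((((-1 : ℤˣ) ^ (x * y) : ℤˣ) : ℤ) • br Y X))
    (hbr_jacobi : ∀ (x y z : ℤ) (X Y Z : 𝒜), X ∈ G x → Y ∈ G y → Z ∈ G z →
      br (br X Y) Z =
        br X (br Y Z) - (((-1 : ℤˣ) ^ (x * y) : ℤˣ) : ℤ) • br Y (br X Z))
    (hwg_grade : ∀ (x y : ℤ) (X Y : 𝒜), X ∈ G x → Y ∈ G y → wg X Y ∈ G (x + y + 1))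
    (hwg_assoc : ∀ X Y Z : 𝒜, wg (wg X Y) Z = wg X (wg Y Z))
    (hwg_comm : ∀ (x y : ℤ) (X Y : 𝒜), X ∈ G x → Y ∈ G y →
      wg X Y = (((-1 : ℤˣ) ^ ((x + 1) * (y + 1)) : ℤˣ) : ℤ) • wg Y X)
    (hleibniz : ∀ (x y z : ℤ) (X Y Z : 𝒜), X ∈ G x → Y ∈ G y → Z ∈ G z →
      br X (wg Y Z) =
        wg (br X Y) Z + (((-1 : ℤˣ) ^ (x * (y + 1)) : ℤˣ) : ℤ) • wg Y (br X Z))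
    -- the degree `-1` operator `D`
    (D : 𝒜 →ₗ[k] 𝒜)
    (hD_grade : ∀ (n : ℤ) (X : 𝒜), X ∈ G n → D X ∈ G (n - 1))
    (hDD : ∀ X : 𝒜, D (D X) = 0)
    (hD_wg : ∀ (x y : ℤ) (X Y : 𝒜), X ∈ G x → Y ∈ G y →
      D (wg X Y) = wg (D X) Y + (((-1 : ℤˣ) ^ (x + 1) : ℤˣ) : ℤ) • wg X (D Y))
    (hD_br : ∀ (x y : ℤ) (X Y : 𝒜), X ∈ G x → Y ∈ G y →
      D (br X Y) = br (D X) Y + (((-1 : ℤˣ) ^ x : ℤˣ) : ℤ) • br X (D Y))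
    -- the deformation parameter
    (h : k) :
    ∀ (x y z : ℤ) (X Y Z : 𝒜), X ∈ G x → Y ∈ G y → Z ∈ G z →
      (brD br wg D h x y X Y =
        -((((-1 : ℤˣ) ^ (x * y) : ℤˣ) : ℤ) • brD br wg D h y x Y X)) ∧
      brD br wg D h (x + y) z (brD br wg D h x y X Y) Z =
        brD br wg D h x (y + z) X (brD br wg D h y z Y Z) -
          (((-1 : ℤˣ) ^ (x * y) : ℤˣ) : ℤ) •
            brD br wg D h y (x + z) Y (brD br wg D h x z X Z) := by
  intro x y z X Y Z hX hY hZ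
  have hA : IsGerstenhaber G br wg :=
    { mem := hwg_grade _ _ _ _
      assoc := hwg_assoc
      comm := hwg_comm _ _ _ _
      br_mem := hbr_grade _ _ _ _
      isGradedLieBracket := ⟨hbr_skew _ _ _ _, hbr_jacobi _ _ _ _ _ _⟩
      br_wg_right := hleibniz _ _ _ _ _ _ }
  have hD : IsDifferential G wg D := ⟨hD_grade _ _, hDD, hD_wg _ _ _ _⟩
  have hLie := hA.isGradedLieBracket.add_smul
    (isGradedLieBracket_deformationBracket hA.toIsGradedCommProduct hD)
    (mixedJacobi_deformationBracket hA hD.mem (hD_br _ _ _ _)) h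
  exact ⟨hLie.skew hX hY, hLie.jacobi hX hY hZ⟩

theorem statement17 (k : Type*) [Field k] [CharZero k]
    (𝒜 : Type*) [AddCommGroup 𝒜] [Module k 𝒜]
    -- the grading
    (G : ℤ → Submodule k 𝒜)
    -- the (bilinear) graded Lie bracket and associative product
    (br wg : 𝒜 →ₗ[k] 𝒜 →ₗ[k] 𝒜)
    -- Gerstenhaber algebra axioms (for homogeneous elements)
    (hbr_grade : ∀ (x y : ℤ) (X Y : 𝒜), X ∈ G x → Y ∈ G y → br X Y ∈ G (x + y))
    (hbr_skew : ∀ (x y : ℤ) (X Y : 𝒜), X ∈ G x → Y ∈ G y →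
      br X Y = -((((-1 : ℤˣ) ^ (x * y) : ℤˣ) : ℤ) • br Y X))
    (hbr_jacobi : ∀ (x y z : ℤ) (X Y Z : 𝒜), X ∈ G x → Y ∈ G y → Z ∈ G z →
      br (br X Y) Z =
        br X (br Y Z) - (((-1 : ℤˣ) ^ (x * y) : ℤˣ) : ℤ) • br Y (br X Z))
    (hwg_grade : ∀ (x y : ℤ) (X Y : 𝒜), X ∈ G x → Y ∈ G y → wg X Y ∈ G (x + y + 1))
    (hwg_assoc : ∀ X Y Z : 𝒜, wg (wg X Y) Z = wg X (wg Y Z))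
    (hwg_comm : ∀ (x y : ℤ) (X Y : 𝒜), X ∈ G x → Y ∈ G y →
      wg X Y = (((-1 : ℤˣ) ^ ((x + 1) * (y + 1)) : ℤˣ) : ℤ) • wg Y X)
    (hleibniz : ∀ (x y z : ℤ) (X Y Z : 𝒜), X ∈ G x → Y ∈ G y → Z ∈ G z →
      br X (wg Y Z) =
        wg (br X Y) Z + (((-1 : ℤˣ) ^ (x * (y + 1)) : ℤˣ) : ℤ) • wg Y (br X Z))
    -- the degree `-1` operator `D`
    (D : 𝒜 →ₗ[k] 𝒜)
    (hD_grade : ∀ (n : ℤ) (X : 𝒜), X ∈ G n → D X ∈ G (n - 1))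
    (hDD : ∀ X : 𝒜, D (D X) = 0)
    (hD_wg : ∀ (x y : ℤ) (X Y : 𝒜), X ∈ G x → Y ∈ G y →
      D (wg X Y) = wg (D X) Y + (((-1 : ℤˣ) ^ (x + 1) : ℤˣ) : ℤ) • wg X (D Y))
    (hD_br : ∀ (x y : ℤ) (X Y : 𝒜), X ∈ G x → Y ∈ G y →
      D (br X Y) = br (D X) Y + (((-1 : ℤˣ) ^ x : ℤˣ) : ℤ) • br X (D Y))
    -- the deformation parameter
    (h : k) :
    ∀ (x y z : ℤ) (X Y Z : 𝒜), X ∈ G x → Y ∈ G y → Z ∈ G z →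
      (brD br wg D h x y X Y =
        -((((-1 : ℤˣ) ^ (x * y) : ℤˣ) : ℤ) • brD br wg D h y x Y X)) ∧
      brD br wg D h (x + y) z (brD br wg D h x y X Y) Z =
        brD br wg D h x (y + z) X (brD br wg D h y z Y Z) -
          (((-1 : ℤˣ) ^ (x * y) : ℤˣ) : ℤ) •
            brD br wg D h y (x + z) Y (brD br wg D h x z X Z) :=
  statement17_general k 𝒜 G br wg hbr_grade hbr_skew hbr_jacobi hwg_grade hwg_assoc hwg_comm
    hleibniz D hD_grade hDD hD_wg hD_br h

end JacobiRevisited17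
end
end

section
/- Let (𝒜, ∧, 1, [·,·]) be a Gerstenhaber–Jacobi algebra with 𝒜^n = 0 for n < −1, such that for every n ≥ 1 the space 𝒜^n is spanned by wedge products Y∧Z with Y ∈ 𝒜^y, Z ∈ 𝒜^z, −1 ≤ y,z < n, y+z+1 = n, and such that for every homogeneous W of degree −1 or 0, if W∧Z = 0 for all Z ∈ 𝒜^0 then W = 0. Let d_* : 𝒜 → 𝒜 be a linear map of degree +1 satisfying d_*(Y∧Z) = (d_*Y)∧Z + (−1)^{y+1} Y∧(d_*Z) − (d_*1)∧Y∧Z. If the derivation identity d_*[X,Y] = [d_*X,Y] + (−1)^x[X,d_*Y] holds for all X,Y ∈ 𝒜^0 and also for all X ∈ 𝒜^{−1} ∪ 𝒜^0 with Y = 1, then it holds for all homogeneous X,Y ∈ 𝒜. -/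
/-!
Measure the failure of the derivation identity by the defect `D_X = [d_*, ad_X] - ad_{d_* X}`.
Both `d_*` and `ad_X` are first-order operators for `∧` in the sense of the generalized Leibniz
rule, and first-order operators are closed under graded commutators and differences, so `D_X` is
first order. A first-order operator vanishing in degrees `-1` and `0` vanishes everywhere, since
these degrees generate `𝒜` under `∧`. The defect is graded skew-symmetric, so it remains to treat
`X` of degree `-1` or `0`; there the value of `D_X` on `𝒜^{-1}` is detected by wedging with `𝒜^0`,
which reduces everything to the hypotheses on `𝒜^0 × 𝒜^0` and on the unit.
-/

namespace JacobiRevisited19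

section FirstOrder

variable {k 𝒜 : Type*} [CommRing k] [AddCommGroup 𝒜] [Module k 𝒜]
  (G : ℤ → Submodule k 𝒜) (wg : 𝒜 →ₗ[k] 𝒜 →ₗ[k] 𝒜) (e : 𝒜)

structure IsFirstOrder (p : ℤ) (P : 𝒜 →ₗ[k] 𝒜) : Prop where
  mem : ∀ (y : ℤ) (Y : 𝒜), Y ∈ G y → P Y ∈ G (y + p)
  map_wg : ∀ (y z : ℤ) (Y Z : 𝒜), Y ∈ G y → Z ∈ G z →
    P (wg Y Z) = wg (P Y) Z + ((p * (y + 1)).negOnePow : ℤ) • wg Y (P Z) - wg (P e) (wg Y Z)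

def gradedComm (p q : ℤ) (P Q : 𝒜 →ₗ[k] 𝒜) : 𝒜 →ₗ[k] 𝒜 :=
  P ∘ₗ Q - ((p * q).negOnePow : ℤ) • (Q ∘ₗ P)

variable {G wg e}

theorem IsFirstOrder.sub {p : ℤ} {P Q : 𝒜 →ₗ[k] 𝒜} (hP : IsFirstOrder G wg e p P)
    (hQ : IsFirstOrder G wg e p Q) : IsFirstOrder G wg e p (P - Q) where
  mem y Y hY := sub_mem (hP.mem y Y hY) (hQ.mem y Y hY)
  map_wg y z Y Z hY hZ := by
    simp only [LinearMap.sub_apply, hP.map_wg y z Y Z hY hZ, hQ.map_wg y z Y Z hY hZ, map_sub]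
    module

theorem IsFirstOrder.gradedComm
    (hwg_grade : ∀ (x y : ℤ) (X Y : 𝒜), X ∈ G x → Y ∈ G y → wg X Y ∈ G (x + y + 1))
    (he : e ∈ G (-1)) {p q : ℤ} {P Q : 𝒜 →ₗ[k] 𝒜} (hP : IsFirstOrder G wg e p P)
    (hQ : IsFirstOrder G wg e q Q) : IsFirstOrder G wg e (p + q) (gradedComm p q P Q) where
  mem y Y hY := by
    have hPQ := hP.mem _ _ (hQ.mem y Y hY)
    have hQP := hQ.mem _ _ (hP.mem y Y hY)
    rw [show y + q + p = y + (p + q) by ring] at hPQ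
    rw [show y + p + q = y + (p + q) by ring] at hQP
    exact sub_mem hPQ (zsmul_mem hQP _)
  map_wg y z Y Z hY hZ := by
    have hYZ := hwg_grade y z Y Z hY hZ
    simp only [JacobiRevisited19.gradedComm, LinearMap.sub_apply, LinearMap.smul_apply,
      LinearMap.comp_apply]
    rw [hQ.map_wg y z Y Z hY hZ, hP.map_wg y z Y Z hY hZ]
    simp only [map_add, map_sub, map_zsmul]
    rw [hP.map_wg _ z _ Z (hQ.mem y Y hY) hZ, hP.map_wg y _ Y _ hY (hQ.mem z Z hZ),
      hP.map_wg _ _ _ _ (hQ.mem _ e he) hYZ, hQ.map_wg _ z _ Z (hP.mem y Y hY) hZ,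
      hQ.map_wg y _ Y _ hY (hP.mem z Z hZ), hQ.map_wg _ _ _ _ (hP.mem _ e he) hYZ,
      hP.map_wg y z Y Z hY hZ, hQ.map_wg y z Y Z hY hZ]
    have h1 : p * (y + q + 1) = p * q + p * (y + 1) := by ring
    have h2 : q * (y + p + 1) = p * q + q * (y + 1) := by ring
    have h3 : p * (-1 + q + 1) = p * q := by ring
    have h4 : q * (-1 + p + 1) = p * q := by ring
    have h5 : (p + q) * (y + 1) = p * (y + 1) + q * (y + 1) := by ring
    simp only [h1, h2, h3, h4, h5, Int.negOnePow_add, Units.val_mul, map_add, map_sub, map_zsmul,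
      LinearMap.sub_apply, LinearMap.smul_apply]
    -- with the exponents split, the only sign relation left to use is `((-1) ^ (p * q)) ^ 2 = 1`
    rcases Int.units_eq_one_or (p * q).negOnePow with h | h <;>
    · simp only [h, Units.val_one, Units.val_neg]
      module

theorem IsFirstOrder.map_wg_eq_zero {p : ℤ} {P : 𝒜 →ₗ[k] 𝒜} (hP : IsFirstOrder G wg e p P)
    {y z : ℤ} {Y Z : 𝒜} (hY : Y ∈ G y) (hZ : Z ∈ G z) (hPY : P Y = 0) (hPZ : P Z = 0)
    (hPe : P e = 0) : P (wg Y Z) = 0 := by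
  simp [hP.map_wg y z Y Z hY hZ, hPY, hPZ, hPe]

theorem IsFirstOrder.eq_zero_of_mem_neg_one
    (hwg_grade : ∀ (x y : ℤ) (X Y : 𝒜), X ∈ G x → Y ∈ G y → wg X Y ∈ G (x + y + 1))
    (hfaithful : ∀ W : 𝒜, (W ∈ G (-1) ∨ W ∈ G 0) → (∀ Z ∈ G 0, wg W Z = 0) → W = 0)
    {p : ℤ} {P : 𝒜 →ₗ[k] 𝒜} (hP : IsFirstOrder G wg e p P) (hp : p = 0 ∨ p = 1)
    (hP0 : ∀ Z ∈ G 0, P Z = 0) (hPe : P e = 0) {Y : 𝒜} (hY : Y ∈ G (-1)) : P Y = 0 := by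
  refine hfaithful _ ?_ fun Z hZ => ?_
  · rcases hp with rfl | rfl
    · exact Or.inl (by simpa using hP.mem _ _ hY)
    · exact Or.inr (by simpa using hP.mem _ _ hY)
  · have hYZ : wg Y Z ∈ G 0 := by simpa using hwg_grade _ _ _ _ hY hZ
    simpa [hP0 _ hYZ, hP0 _ hZ, hPe, eq_comm] using hP.map_wg _ _ _ _ hY hZ

theorem IsFirstOrder.eq_zero_of_low_degrees
    (hbot : ∀ n : ℤ, n < -1 → G n = ⊥)
    (hspan : ∀ n : ℤ, 1 ≤ n → G n ≤ Submodule.span k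
      {W : 𝒜 | ∃ (y z : ℤ) (Y Z : 𝒜), -1 ≤ y ∧ y < n ∧ -1 ≤ z ∧ z < n ∧
        y + z + 1 = n ∧ Y ∈ G y ∧ Z ∈ G z ∧ W = wg Y Z})
    (he : e ∈ G (-1)) {p : ℤ} {P : 𝒜 →ₗ[k] 𝒜} (hP : IsFirstOrder G wg e p P)
    (hPneg : ∀ Y ∈ G (-1), P Y = 0) (hPzero : ∀ Y ∈ G 0, P Y = 0) :
    ∀ (y : ℤ), ∀ Y ∈ G y, P Y = 0 := by
  suffices h : ∀ n : ℕ, ∀ y : ℤ, y ≤ n → ∀ Y ∈ G y, P Y = 0 from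
    fun y => h y.toNat y (Int.self_le_toNat y)
  intro n
  induction n with
  | zero =>
    intro y hy Y hY
    obtain hy | rfl | rfl : y < -1 ∨ y = -1 ∨ y = 0 := by omega
    · rw [hbot y hy, Submodule.mem_bot] at hY
      rw [hY, map_zero]
    · exact hPneg Y hY
    · exact hPzero Y hY
  | succ n ih =>
    intro y hy Y hY
    obtain hy | rfl := hy.lt_or_eq
    · exact ih y (by omega) Y hY
    refine LinearMap.mem_ker.mp <| Submodule.span_le.mpr ?_ (hspan _ (by omega) hY)
    rintro _ ⟨y', z', Y', Z', -, hy', -, hz', -, hY', hZ', rfl⟩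
    exact hP.map_wg_eq_zero hY' hZ' (ih _ (by omega) _ hY') (ih _ (by omega) _ hZ')
      (ih _ (by omega) _ he)

end FirstOrder

section Defect

variable {k 𝒜 : Type*} [CommRing k] [AddCommGroup 𝒜] [Module k 𝒜] {G : ℤ → Submodule k 𝒜}
  {wg : 𝒜 →ₗ[k] 𝒜 →ₗ[k] 𝒜} {e : 𝒜} (br : 𝒜 →ₗ[k] 𝒜 →ₗ[k] 𝒜) (d : 𝒜 →ₗ[k] 𝒜)

def derivDefect (x : ℤ) (X : 𝒜) : 𝒜 →ₗ[k] 𝒜 :=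
  gradedComm 1 x d (br X) - br (d X)

theorem derivDefect_apply (x : ℤ) (X Y : 𝒜) :
    derivDefect br d x X Y = d (br X Y) - br (d X) Y - (x.negOnePow : ℤ) • br X (d Y) := by
  simp only [derivDefect, gradedComm, LinearMap.sub_apply, LinearMap.smul_apply,
    LinearMap.comp_apply, one_mul, sub_right_comm]

theorem derivDefect_eq_zero_iff {x : ℤ} {X Y : 𝒜} :
    derivDefect br d x X Y = 0 ↔ d (br X Y) = br (d X) Y + (x.negOnePow : ℤ) • br X (d Y) := by
  rw [derivDefect_apply, sub_sub, sub_eq_zero]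

theorem isFirstOrder_br
    (hbr_grade : ∀ (x y : ℤ) (X Y : 𝒜), X ∈ G x → Y ∈ G y → br X Y ∈ G (x + y))
    (hleibniz : ∀ (x y z : ℤ) (X Y Z : 𝒜), X ∈ G x → Y ∈ G y → Z ∈ G z →
      br X (wg Y Z) =
        wg (br X Y) Z + ((x * (y + 1)).negOnePow : ℤ) • wg Y (br X Z) - wg (br X e) (wg Y Z))
    {x : ℤ} {X : 𝒜} (hX : X ∈ G x) : IsFirstOrder G wg e x (br X) where
  mem y Y hY := add_comm x y ▸ hbr_grade x y X Y hX hY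
  map_wg y z Y Z hY hZ := hleibniz x y z X Y Z hX hY hZ

theorem isFirstOrder_derivDefect
    (hbr_grade : ∀ (x y : ℤ) (X Y : 𝒜), X ∈ G x → Y ∈ G y → br X Y ∈ G (x + y))
    (hwg_grade : ∀ (x y : ℤ) (X Y : 𝒜), X ∈ G x → Y ∈ G y → wg X Y ∈ G (x + y + 1))
    (hleibniz : ∀ (x y z : ℤ) (X Y Z : 𝒜), X ∈ G x → Y ∈ G y → Z ∈ G z →
      br X (wg Y Z) =
        wg (br X Y) Z + ((x * (y + 1)).negOnePow : ℤ) • wg Y (br X Z) - wg (br X e) (wg Y Z))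
    (he : e ∈ G (-1))
    (hd_grade : ∀ (n : ℤ) (X : 𝒜), X ∈ G n → d X ∈ G (n + 1))
    (hd_wg : ∀ (y z : ℤ) (Y Z : 𝒜), Y ∈ G y → Z ∈ G z →
      d (wg Y Z) =
        wg (d Y) Z + ((y + 1).negOnePow : ℤ) • wg Y (d Z) - wg (d e) (wg Y Z))
    {x : ℤ} {X : 𝒜} (hX : X ∈ G x) : IsFirstOrder G wg e (x + 1) (derivDefect br d x X) := by
  have hd : IsFirstOrder G wg e 1 d := ⟨hd_grade, fun y z Y Z hY hZ => by
    rw [one_mul]; exact hd_wg y z Y Z hY hZ⟩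
  have hcomm := hd.gradedComm hwg_grade he (isFirstOrder_br br hbr_grade hleibniz hX)
  rw [add_comm] at hcomm
  exact hcomm.sub (isFirstOrder_br br hbr_grade hleibniz (hd_grade x X hX))

theorem derivDefect_swap
    (hbr_skew : ∀ (x y : ℤ) (X Y : 𝒜), X ∈ G x → Y ∈ G y →
      br X Y = -(((x * y).negOnePow : ℤ) • br Y X))
    (hd_grade : ∀ (n : ℤ) (X : 𝒜), X ∈ G n → d X ∈ G (n + 1))
    {x y : ℤ} {X Y : 𝒜} (hX : X ∈ G x) (hY : Y ∈ G y) :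
    derivDefect br d x X Y = -(((x * y).negOnePow : ℤ) • derivDefect br d y Y X) := by
  rw [derivDefect_apply, derivDefect_apply, hbr_skew x y X Y hX hY,
    hbr_skew (x + 1) y (d X) Y (hd_grade x X hX) hY,
    hbr_skew x (y + 1) X (d Y) hX (hd_grade y Y hY)]
  simp only [add_mul, mul_add, mul_one, one_mul, Int.negOnePow_add,
    Units.val_mul, map_neg, map_zsmul]
  rcases Int.units_eq_one_or x.negOnePow with h | h <;>
  · simp only [h, Units.val_one, Units.val_neg]
    module

end Defect

theorem statement19_general (k : Type*) [Field k]
    (𝒜 : Type*) [AddCommGroup 𝒜] [Module k 𝒜]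
    -- the grading
    (G : ℤ → Submodule k 𝒜)
    -- the (bilinear) graded Lie bracket, associative product, and unit
    (br wg : 𝒜 →ₗ[k] 𝒜 →ₗ[k] 𝒜) (e : 𝒜)
    -- Gerstenhaber–Jacobi algebra axioms (for homogeneous elements)
    (he : e ∈ G (-1))
    (hbr_grade : ∀ (x y : ℤ) (X Y : 𝒜), X ∈ G x → Y ∈ G y → br X Y ∈ G (x + y))
    (hbr_skew : ∀ (x y : ℤ) (X Y : 𝒜), X ∈ G x → Y ∈ G y →
      br X Y = -((((-1 : ℤˣ) ^ (x * y) : ℤˣ) : ℤ) • br Y X))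
    (hwg_grade : ∀ (x y : ℤ) (X Y : 𝒜), X ∈ G x → Y ∈ G y → wg X Y ∈ G (x + y + 1))
    -- the generalized Leibniz rule, with `D̃(X) = [X,1]`
    (hleibniz : ∀ (x y z : ℤ) (X Y Z : 𝒜), X ∈ G x → Y ∈ G y → Z ∈ G z →
      br X (wg Y Z) =
        wg (br X Y) Z + (((-1 : ℤˣ) ^ (x * (y + 1)) : ℤˣ) : ℤ) • wg Y (br X Z) -
          wg (br X e) (wg Y Z))
    -- `𝒜^n = 0` for `n < -1`
    (hbot : ∀ n : ℤ, n < -1 → G n = ⊥)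
    -- for `n ≥ 1`, `𝒜^n` is spanned by wedge products of lower degrees
    (hspan : ∀ n : ℤ, 1 ≤ n → G n ≤ Submodule.span k
      {W : 𝒜 | ∃ (y z : ℤ) (Y Z : 𝒜), -1 ≤ y ∧ y < n ∧ -1 ≤ z ∧ z < n ∧
        y + z + 1 = n ∧ Y ∈ G y ∧ Z ∈ G z ∧ W = wg Y Z})
    -- faithfulness in degrees `-1` and `0`
    (hfaithful : ∀ W : 𝒜, (W ∈ G (-1) ∨ W ∈ G 0) →
      (∀ Z ∈ G 0, wg W Z = 0) → W = 0)
    -- the degree `+1` operator `d_*` and its Leibniz-type rule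
    (d : 𝒜 →ₗ[k] 𝒜)
    (hd_grade : ∀ (n : ℤ) (X : 𝒜), X ∈ G n → d X ∈ G (n + 1))
    (hd_wg : ∀ (y z : ℤ) (Y Z : 𝒜), Y ∈ G y → Z ∈ G z →
      d (wg Y Z) =
        wg (d Y) Z + (((-1 : ℤˣ) ^ (y + 1) : ℤˣ) : ℤ) • wg Y (d Z) -
          wg (d e) (wg Y Z))
    -- the derivation identity holds on `𝒜^0 × 𝒜^0` ...
    (h00 : ∀ X Y : 𝒜, X ∈ G 0 → Y ∈ G 0 →
      d (br X Y) = br (d X) Y + br X (d Y))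
    -- ... and for all `X ∈ 𝒜^{-1} ∪ 𝒜^0` with `Y = 1`
    (hunit_case : ∀ (x : ℤ) (X : 𝒜), (x = -1 ∨ x = 0) → X ∈ G x →
      d (br X e) = br (d X) e + (((-1 : ℤˣ) ^ x : ℤˣ) : ℤ) • br X (d e)) :
    -- conclusion: it holds for all homogeneous elements
    ∀ (x y : ℤ) (X Y : 𝒜), X ∈ G x → Y ∈ G y →
      d (br X Y) = br (d X) Y + (((-1 : ℤˣ) ^ x : ℤˣ) : ℤ) • br X (d Y) := by
  have hD : ∀ x X, X ∈ G x → IsFirstOrder G wg e (x + 1) (derivDefect br d x X) :=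
    fun x X hX => isFirstOrder_derivDefect br d hbr_grade hwg_grade hleibniz he hd_grade hd_wg hX
  have hswap : ∀ {x y : ℤ} {X Y : 𝒜}, X ∈ G x → Y ∈ G y →
      derivDefect br d y Y X = 0 → derivDefect br d x X Y = 0 := fun hX hY h => by
    rw [derivDefect_swap br d hbr_skew hd_grade hX hY, h, smul_zero, neg_zero]
  have hlow : ∀ x X, (x = -1 ∨ x = 0) → X ∈ G x → (∀ Y ∈ G 0, derivDefect br d x X Y = 0) →
      ∀ y, ∀ Y ∈ G y, derivDefect br d x X Y = 0 := by
    intro x X hx hX h0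
    have hunit := (derivDefect_eq_zero_iff br d).mpr (hunit_case x X hx hX)
    exact (hD x X hX).eq_zero_of_low_degrees hbot hspan he
      (fun Y => (hD x X hX).eq_zero_of_mem_neg_one hwg_grade hfaithful (by omega) h0 hunit) h0
  have hzero : ∀ X ∈ G 0, ∀ y, ∀ Y ∈ G y, derivDefect br d 0 X Y = 0 := fun X hX =>
    hlow 0 X (.inr rfl) hX fun Y hY =>
      (derivDefect_eq_zero_iff br d).mpr (by simpa using h00 X Y hX hY)
  have hneg_one : ∀ X ∈ G (-1), ∀ y, ∀ Y ∈ G y, derivDefect br d (-1) X Y = 0 := fun X hX =>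
    hlow (-1) X (.inl rfl) hX fun Y hY => hswap hX hY (hzero Y hY _ X hX)
  intro x y X Y hX hY
  refine (derivDefect_eq_zero_iff br d).mp
    ((hD x X hX).eq_zero_of_low_degrees hbot hspan he ?_ ?_ y Y hY)
  · exact fun Y hY => hswap hX hY (hneg_one Y hY x X hX)
  · exact fun Y hY => hswap hX hY (hzero Y hY x X hX)

theorem statement19 (k : Type*) [Field k] [CharZero k]
    (𝒜 : Type*) [AddCommGroup 𝒜] [Module k 𝒜]
    -- the grading
    (G : ℤ → Submodule k 𝒜)
    -- the (bilinear) graded Lie bracket, associative product, and unit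
    (br wg : 𝒜 →ₗ[k] 𝒜 →ₗ[k] 𝒜) (e : 𝒜)
    -- Gerstenhaber–Jacobi algebra axioms (for homogeneous elements)
    (he : e ∈ G (-1)) (hunit : ∀ X : 𝒜, wg e X = X)
    (hbr_grade : ∀ (x y : ℤ) (X Y : 𝒜), X ∈ G x → Y ∈ G y → br X Y ∈ G (x + y))
    (hbr_skew : ∀ (x y : ℤ) (X Y : 𝒜), X ∈ G x → Y ∈ G y →
      br X Y = -((((-1 : ℤˣ) ^ (x * y) : ℤˣ) : ℤ) • br Y X))
    (hbr_jacobi : ∀ (x y z : ℤ) (X Y Z : 𝒜), X ∈ G x → Y ∈ G y → Z ∈ G z →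
      br (br X Y) Z =
        br X (br Y Z) - (((-1 : ℤˣ) ^ (x * y) : ℤˣ) : ℤ) • br Y (br X Z))
    (hwg_grade : ∀ (x y : ℤ) (X Y : 𝒜), X ∈ G x → Y ∈ G y → wg X Y ∈ G (x + y + 1))
    (hwg_assoc : ∀ X Y Z : 𝒜, wg (wg X Y) Z = wg X (wg Y Z))
    (hwg_comm : ∀ (x y : ℤ) (X Y : 𝒜), X ∈ G x → Y ∈ G y →
      wg X Y = (((-1 : ℤˣ) ^ ((x + 1) * (y + 1)) : ℤˣ) : ℤ) • wg Y X)
    -- the generalized Leibniz rule, with `D̃(X) = [X,1]`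
    (hleibniz : ∀ (x y z : ℤ) (X Y Z : 𝒜), X ∈ G x → Y ∈ G y → Z ∈ G z →
      br X (wg Y Z) =
        wg (br X Y) Z + (((-1 : ℤˣ) ^ (x * (y + 1)) : ℤˣ) : ℤ) • wg Y (br X Z) -
          wg (br X e) (wg Y Z))
    -- `𝒜^n = 0` for `n < -1`
    (hbot : ∀ n : ℤ, n < -1 → G n = ⊥)
    -- for `n ≥ 1`, `𝒜^n` is spanned by wedge products of lower degrees
    (hspan : ∀ n : ℤ, 1 ≤ n → G n ≤ Submodule.span k
      {W : 𝒜 | ∃ (y z : ℤ) (Y Z : 𝒜), -1 ≤ y ∧ y < n ∧ -1 ≤ z ∧ z < n ∧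
        y + z + 1 = n ∧ Y ∈ G y ∧ Z ∈ G z ∧ W = wg Y Z})
    -- faithfulness in degrees `-1` and `0`
    (hfaithful : ∀ W : 𝒜, (W ∈ G (-1) ∨ W ∈ G 0) →
      (∀ Z ∈ G 0, wg W Z = 0) → W = 0)
    -- the degree `+1` operator `d_*` and its Leibniz-type rule
    (d : 𝒜 →ₗ[k] 𝒜)
    (hd_grade : ∀ (n : ℤ) (X : 𝒜), X ∈ G n → d X ∈ G (n + 1))
    (hd_wg : ∀ (y z : ℤ) (Y Z : 𝒜), Y ∈ G y → Z ∈ G z →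
      d (wg Y Z) =
        wg (d Y) Z + (((-1 : ℤˣ) ^ (y + 1) : ℤˣ) : ℤ) • wg Y (d Z) -
          wg (d e) (wg Y Z))
    -- the derivation identity holds on `𝒜^0 × 𝒜^0` ...
    (h00 : ∀ X Y : 𝒜, X ∈ G 0 → Y ∈ G 0 →
      d (br X Y) = br (d X) Y + br X (d Y))
    -- ... and for all `X ∈ 𝒜^{-1} ∪ 𝒜^0` with `Y = 1`
    (hunit_case : ∀ (x : ℤ) (X : 𝒜), (x = -1 ∨ x = 0) → X ∈ G x →
      d (br X e) = br (d X) e + (((-1 : ℤˣ) ^ x : ℤˣ) : ℤ) • br X (d e)) :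
    -- conclusion: it holds for all homogeneous elements
    ∀ (x y : ℤ) (X Y : 𝒜), X ∈ G x → Y ∈ G y →
      d (br X Y) = br (d X) Y + (((-1 : ℤˣ) ^ x : ℤˣ) : ℤ) • br X (d Y) :=
  statement19_general k 𝒜 G br wg e he hbr_grade hbr_skew hwg_grade hleibniz hbot hspan hfaithful d
    hd_grade hd_wg h00 hunit_case

end JacobiRevisited19
end
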